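/- Let k be a positive integer with k ≡ 0 (mod 4), and let s ∈ ℂ satisfy: cos(πs/2) ≠ 0; s ≠ −n and s ≠ k + n for every natural number n; s ≠ 1; s ≠ k − 1; ζ(s) ≠ 0; and ζ(k−s) ≠ 0. Then (deriv Λ_k)(s) = Λ_k(s) · ( −(π/2)·tan(πs/2) + ψ(s) − ψ(k−s) + ζ'(s)/ζ(s) − ζ'(k−s)/ζ(k−s) ), where ψ(w) := Γ'(w)/Γ(w) is the logarithmic derivative of the complex Gamma function. -/

import Mathlib

open Complex

/-- The completed `L`-function of the weight-`k` Eisenstein series `E_k`: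
`Λ_k(s) = (2π)^(−s) · Γ(s) · ζ(s) · ζ(s−k+1)`. -/
noncomputable def completedEisensteinL (k : ℕ) (s : ℂ) : ℂ :=
  (2 * Real.pi : ℂ) ^ (-s) * Complex.Gamma s * riemannZeta s * riemannZeta (s - k + 1)

/-!
The functional equation `ζ(1 - w) = 2 (2π)^(-w) Γ(w) cos(πw/2) ζ(w)` at `w = k - s` rewrites the
factor `ζ(s - k + 1)`, and `cos(π(k - s)/2) = cos(πs/2)` because `4 ∣ k`. Hence, on a neighbourhood
of `s`, `Λ_k = 2 (2π)^(-k) Γ(s) Γ(k - s) cos(πs/2) ζ(s) ζ(k - s)`, and the formula is the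
logarithmic derivative of this product, taken factor by factor.
-/

open Filter Topology

theorem logDeriv_comp_const_sub {𝕜 𝕜' : Type*} [NontriviallyNormedField 𝕜]
    [NontriviallyNormedField 𝕜'] [NormedAlgebra 𝕜 𝕜'] (f : 𝕜 → 𝕜') (a x : 𝕜) :
    logDeriv (fun z ↦ f (a - z)) x = -logDeriv f (a - x) := by
  simp only [logDeriv_apply, deriv_comp_const_sub, neg_div]

theorem logDeriv_cos_pi_mul_div_two (x : ℂ) :
    logDeriv (fun z ↦ cos (Real.pi * z / 2)) x = -(Real.pi / 2) * tan (Real.pi * x / 2) := by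
  have hlin : HasDerivAt (fun z : ℂ ↦ Real.pi * z / 2) (Real.pi / 2) x := by
    simpa using ((hasDerivAt_id x).const_mul (Real.pi : ℂ)).div_const 2
  rw [← Function.comp_def, logDeriv_comp differentiable_cos.differentiableAt
    hlin.differentiableAt, logDeriv_cos, hlin.deriv, Pi.neg_apply, neg_mul_comm, mul_comm]

theorem cos_pi_mul_natCast_sub_div_two {k : ℕ} (hk : 4 ∣ k) (z : ℂ) :
    cos (Real.pi * (k - z) / 2) = cos (Real.pi * z / 2) := by
  obtain ⟨m, rfl⟩ := hk
  rw [← cos_nat_mul_two_pi_sub (Real.pi * z / 2) m]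
  push_cast
  ring_nf

theorem isClosed_setOf_eq_neg_natCast_or_eq_one :
    IsClosed {w : ℂ | (∃ n : ℕ, w = -n) ∨ w = 1} := by
  have hset : {w : ℂ | (∃ n : ℕ, w = -n) ∨ w = 1} = (↑) '' Set.Iic (1 : ℤ) := by
    ext w
    constructor
    · rintro (⟨n, rfl⟩ | rfl)
      · exact ⟨-n, by simp only [Set.mem_Iic]; omega, by simp⟩
      · exact ⟨1, Set.mem_Iic.mpr le_rfl, by simp⟩
    · rintro ⟨m, hm, rfl⟩
      rcases (Set.mem_Iic.mp hm).lt_or_eq with hm | rfl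
      · obtain ⟨n, rfl⟩ := Int.exists_eq_neg_ofNat (Int.lt_add_one_iff.mp hm)
        exact .inl ⟨n, by simp⟩
      · exact .inr (by simp)
  rw [hset]
  exact isClosedEmbedding_intCast.isClosedMap _ (isClosed_discrete _)

theorem completedEisensteinL_eq_gamma_mul_gamma {k : ℕ} (hk : 4 ∣ k) {z : ℂ}
    (hz : ∀ n : ℕ, (k : ℂ) - z ≠ -n) (hz₁ : (k : ℂ) - z ≠ 1) :
    completedEisensteinL k z = 2 * (2 * Real.pi : ℂ) ^ (-(k : ℂ)) *
      (Gamma z * Gamma (k - z) * cos (Real.pi * z / 2) * riemannZeta z * riemannZeta (k - z)) := by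
  have hfe := riemannZeta_one_sub hz hz₁
  rw [cos_pi_mul_natCast_sub_div_two hk] at hfe
  have hpow : (2 * Real.pi : ℂ) ^ (-(k : ℂ)) =
      (2 * Real.pi : ℂ) ^ (-z) * (2 * Real.pi : ℂ) ^ (-(k - z)) := by
    rw [← cpow_add _ _ (by exact_mod_cast Real.two_pi_pos.ne')]
    ring_nf
  rw [completedEisensteinL, show z - k + 1 = 1 - (k - z) by ring, hfe, hpow]
  ring

theorem completedEisensteinL_eventuallyEq {k : ℕ} (hk : 4 ∣ k) {s : ℂ}
    (hs : ∀ n : ℕ, (k : ℂ) - s ≠ -n) (hs₁ : (k : ℂ) - s ≠ 1) :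
    completedEisensteinL k =ᶠ[𝓝 s] fun z ↦ 2 * (2 * Real.pi : ℂ) ^ (-(k : ℂ)) *
      (Gamma z * Gamma (k - z) * cos (Real.pi * z / 2) * riemannZeta z * riemannZeta (k - z)) := by
  have hU : {w : ℂ | (∃ n : ℕ, w = -n) ∨ w = 1}ᶜ ∈ 𝓝 ((k : ℂ) - s) :=
    isClosed_setOf_eq_neg_natCast_or_eq_one.isOpen_compl.mem_nhds
      (by simpa only [Set.mem_compl_iff, Set.mem_ofPred_eq, not_or, not_exists] using ⟨hs, hs₁⟩)
  filter_upwards [(continuous_const.sub continuous_id).continuousAt.preimage_mem_nhds hU]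
    with z hz
  simp only [Set.mem_preimage, Set.mem_compl_iff, Set.mem_ofPred_eq, not_or, not_exists] at hz
  exact completedEisensteinL_eq_gamma_mul_gamma hk hz.1 hz.2

theorem completedEisensteinL_ne_zero {k : ℕ} (hk : 4 ∣ k) {s : ℂ}
    (hcos : cos (Real.pi * s / 2) ≠ 0) (hs₀ : ∀ n : ℕ, s ≠ -n)
    (hks : ∀ n : ℕ, (k : ℂ) - s ≠ -n) (hks₁ : (k : ℂ) - s ≠ 1) (hζ : riemannZeta s ≠ 0)
    (hζk : riemannZeta (k - s) ≠ 0) :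
    completedEisensteinL k s ≠ 0 := by
  rw [completedEisensteinL_eq_gamma_mul_gamma hk hks hks₁]
  simp [Real.pi_ne_zero, Gamma_ne_zero, *]

theorem logDeriv_completedEisensteinL {k : ℕ} (hk : 4 ∣ k) {s : ℂ}
    (hcos : cos (Real.pi * s / 2) ≠ 0) (hs₀ : ∀ n : ℕ, s ≠ -n) (hs₁ : s ≠ 1)
    (hks : ∀ n : ℕ, (k : ℂ) - s ≠ -n) (hks₁ : (k : ℂ) - s ≠ 1) (hζ : riemannZeta s ≠ 0)
    (hζk : riemannZeta (k - s) ≠ 0) :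
    logDeriv (completedEisensteinL k) s =
      -(Real.pi / 2) * tan (Real.pi * s / 2) + logDeriv Gamma s - logDeriv Gamma (k - s) +
        logDeriv riemannZeta s - logDeriv riemannZeta (k - s) := by
  have hdΓ := differentiableAt_Gamma s hs₀
  have hdΓk : DifferentiableAt ℂ (fun z ↦ Gamma (k - z)) s :=
    (differentiableAt_Gamma _ hks).comp s (differentiableAt_id.const_sub (k : ℂ))
  have hdζ := differentiableAt_riemannZeta hs₁
  have hdζk : DifferentiableAt ℂ (fun z ↦ riemannZeta (k - z)) s :=
    (differentiableAt_riemannZeta hks₁).comp s (differentiableAt_id.const_sub (k : ℂ))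
  rw [(logDeriv_congr_nhds (completedEisensteinL_eventuallyEq hk hks hks₁)).eq_of_nhds,
    logDeriv_const_mul _ _ (by simp [Real.pi_ne_zero]), logDeriv_mul, logDeriv_mul, logDeriv_mul,
    logDeriv_mul, logDeriv_comp_const_sub, logDeriv_comp_const_sub, logDeriv_cos_pi_mul_div_two]
  · ring
  all_goals first | fun_prop | simp [Gamma_ne_zero, *]

/-- Logarithmic-derivative formula for `Λ_k'`: away from the poles and zeros involved,
`Λ_k'(s) = Λ_k(s)(−(π/2)tan(πs/2) + ψ(s) − ψ(k−s) + ζ'(s)/ζ(s) − ζ'(k−s)/ζ(k−s))`,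
where `ψ = Γ'/Γ` is the digamma function. -/
theorem deriv_completedEisensteinL_eq_logDeriv_sum
    (k : ℕ) (hk4 : k % 4 = 0) (s : ℂ)
    (hcos : Complex.cos (Real.pi * s / 2) ≠ 0)
    (hpole₁ : ∀ n : ℕ, s ≠ -(n : ℂ))
    (hpole₂ : ∀ n : ℕ, s ≠ (k : ℂ) + (n : ℂ))
    (hone : s ≠ 1) (hkone : s ≠ (k : ℂ) - 1)
    (hzeta₁ : riemannZeta s ≠ 0) (hzeta₂ : riemannZeta ((k : ℂ) - s) ≠ 0) :
    deriv (completedEisensteinL k) s =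
      completedEisensteinL k s *
        (-((Real.pi : ℂ) / 2) * Complex.tan (Real.pi * s / 2) +
          deriv Complex.Gamma s / Complex.Gamma s -
          deriv Complex.Gamma ((k : ℂ) - s) / Complex.Gamma ((k : ℂ) - s) +
          deriv riemannZeta s / riemannZeta s -
          deriv riemannZeta ((k : ℂ) - s) / riemannZeta ((k : ℂ) - s)) := by
  have hk : 4 ∣ k := Nat.dvd_of_mod_eq_zero hk4
  have hks : ∀ n : ℕ, (k : ℂ) - s ≠ -n := fun n h ↦ hpole₂ n (by linear_combination -h)
  have hks₁ : (k : ℂ) - s ≠ 1 := fun h ↦ hkone (by linear_combination -h)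
  have hΛ := completedEisensteinL_ne_zero hk hcos hpole₁ hks hks₁ hzeta₁ hzeta₂
  rw [← mul_div_cancel₀ (deriv (completedEisensteinL k) s) hΛ, ← logDeriv_apply,
    logDeriv_completedEisensteinL hk hcos hpole₁ hone hks hks₁ hzeta₁ hzeta₂]
  simp only [logDeriv_apply]
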